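/- Let 0 < b < a be real numbers, let (aₙ), (bₙ) be the arithmetic-geometric mean iteration a₀ = a, b₀ = b, a_{n+1} = (aₙ + bₙ)/2, b_{n+1} = √(aₙ bₙ), and let M be their common limit. Then G(a, b) = π/(2M), where G(a,b) denotes the integral from 0 to π/2 of 1/√(a² cos²θ + b² sin²θ) dθ. -/

import Mathlib

/-! The substitution `x = b tan θ` turns `G(a, b)` into `∫₀^∞ dx / √((x² + a²)(x² + b²))`, and
Landen's substitution `x ↦ (x - ab/x)/2`, a bijection of `(0, ∞)` onto `ℝ`, shows that this integral
is unchanged when `(a, b)` is replaced by `((a + b)/2, √(ab))`. Hence `G(a, b) = G(aₙ, bₙ)` for all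
`n`; as the integrand of `G(aₙ, bₙ)` lies between `1/aₙ` and `1/bₙ`, `G(a, b)` is squeezed between
`π/(2aₙ)` and `π/(2bₙ)`, which both tend to `π/(2M)`. -/

open Real Filter MeasureTheory Set Topology

noncomputable section

def agmIntegrand (a b θ : ℝ) : ℝ := 1 / √(a ^ 2 * cos θ ^ 2 + b ^ 2 * sin θ ^ 2)

def agmIntegral (a b : ℝ) : ℝ := ∫ θ in (0 : ℝ)..(π / 2), agmIntegrand a b θ

def agmKernel (a b x : ℝ) : ℝ := 1 / √((x ^ 2 + a ^ 2) * (x ^ 2 + b ^ 2))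

def landenMap (c x : ℝ) : ℝ := (x - c / x) / 2

end

lemma image_mul_tan_Ioo {b : ℝ} (hb : 0 < b) :
    (fun θ => b * tan θ) '' Ioo 0 (π / 2) = Ioi 0 := by
  refine Subset.antisymm ?_ fun y hy => ?_
  · rintro _ ⟨θ, hθ, rfl⟩
    exact mul_pos hb (tan_pos_of_pos_of_lt_pi_div_two hθ.1 hθ.2)
  · refine ⟨arctan (y / b), ⟨?_, arctan_lt_pi_div_two _⟩, ?_⟩
    · simpa [arctan_zero] using arctan_strictMono (div_pos hy hb)
    · simp only [tan_arctan]
      field_simp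

lemma mul_agmKernel_mul_tan {a b θ : ℝ} (ha : 0 < a) (hb : 0 < b) (hθ : 0 < cos θ) :
    b / cos θ ^ 2 * agmKernel a b (b * tan θ) = agmIntegrand a b θ := by
  have hS : 0 < a ^ 2 * cos θ ^ 2 + b ^ 2 * sin θ ^ 2 := by positivity
  have hprod : ((b * tan θ) ^ 2 + a ^ 2) * ((b * tan θ) ^ 2 + b ^ 2)
      = (a ^ 2 * cos θ ^ 2 + b ^ 2 * sin θ ^ 2) * (b / cos θ ^ 2) ^ 2 := by
    rw [tan_eq_sin_div_cos]
    field_simp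
    linear_combination (b ^ 2 * sin θ ^ 2 + cos θ ^ 2 * a ^ 2) * sin_sq_add_cos_sq θ
  have hS' : √(a ^ 2 * cos θ ^ 2 + b ^ 2 * sin θ ^ 2) ≠ 0 := (sqrt_pos.2 hS).ne'
  rw [agmKernel, agmIntegrand, hprod, sqrt_mul hS.le, sqrt_sq (by positivity)]
  field_simp

lemma agmIntegral_eq_integral_agmKernel {a b : ℝ} (ha : 0 < a) (hb : 0 < b) :
    agmIntegral a b = ∫ x in Ioi 0, agmKernel a b x := by
  have hcos : ∀ θ ∈ Ioo 0 (π / 2), 0 < cos θ := fun θ hθ =>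
    cos_pos_of_mem_Ioo ⟨by linarith [hθ.1, pi_div_two_pos], hθ.2⟩
  have hderiv : ∀ θ ∈ Ioo 0 (π / 2),
      HasDerivWithinAt (fun θ => b * tan θ) (b / cos θ ^ 2) (Ioo 0 (π / 2)) θ := fun θ hθ => by
    simpa [div_eq_mul_inv] using
      ((hasDerivAt_tan (hcos θ hθ).ne').const_mul b).hasDerivWithinAt
  have hinj : InjOn (fun θ => b * tan θ) (Ioo 0 (π / 2)) := fun x hx y hy h =>
    injOn_tan (Ioo_subset_Ioo_left (by linarith [pi_div_two_pos]) hx)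
      (Ioo_subset_Ioo_left (by linarith [pi_div_two_pos]) hy) (mul_left_cancel₀ hb.ne' h)
  rw [← image_mul_tan_Ioo hb,
    integral_image_eq_integral_abs_deriv_smul measurableSet_Ioo hderiv hinj, agmIntegral,
    intervalIntegral.integral_of_le pi_div_two_pos.le, integral_Ioc_eq_integral_Ioo]
  refine setIntegral_congr_fun measurableSet_Ioo fun θ hθ => ?_
  have hc := hcos θ hθ
  rw [smul_eq_mul, abs_of_pos (by positivity), mul_agmKernel_mul_tan ha hb hc]

lemma landenMap_image_Ioi {c : ℝ} (hc : 0 < c) : landenMap c '' Ioi 0 = univ := by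
  refine eq_univ_of_forall fun y => ?_
  have hpos : 0 < y + √(y ^ 2 + c) := by
    have : |y| < √(y ^ 2 + c) := by
      rw [← sqrt_sq_eq_abs]
      exact sqrt_lt_sqrt (sq_nonneg y) (by linarith)
    linarith [neg_le_abs y]
  refine ⟨y + √(y ^ 2 + c), hpos, ?_⟩
  have hsq : √(y ^ 2 + c) ^ 2 = y ^ 2 + c := sq_sqrt (by positivity)
  simp only [landenMap]
  field_simp
  linear_combination hsq

lemma strictMonoOn_landenMap {c : ℝ} (hc : 0 ≤ c) : StrictMonoOn (landenMap c) (Ioi 0) :=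
  fun x hx y _ hxy => by
    have : c / y ≤ c / x := div_le_div_of_nonneg_left hc hx hxy.le
    simp only [landenMap]
    linarith

lemma hasDerivAt_landenMap (c : ℝ) {x : ℝ} (hx : x ≠ 0) :
    HasDerivAt (landenMap c) ((1 + c / x ^ 2) / 2) x := by
  have h := ((hasDerivAt_id x).sub ((hasDerivAt_inv hx).const_mul c)).div_const 2
  refine (h.congr_deriv ?_).congr_of_eventuallyEq (Eventually.of_forall fun y => ?_)
  · simp only [div_eq_mul_inv]
    ring
  · simp [landenMap, div_eq_mul_inv]

lemma mul_agmKernel_landenMap {a b x : ℝ} (ha : 0 < a) (hb : 0 < b) (hx : 0 < x) :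
    (1 + a * b / x ^ 2) / 2 * agmKernel ((a + b) / 2) √(a * b) (landenMap (a * b) x)
      = 2 * agmKernel a b x := by
  have hP : 0 < (x ^ 2 + a ^ 2) * (x ^ 2 + b ^ 2) := by positivity
  have hprod : (landenMap (a * b) x ^ 2 + ((a + b) / 2) ^ 2)
      * (landenMap (a * b) x ^ 2 + √(a * b) ^ 2)
      = (x ^ 2 + a ^ 2) * (x ^ 2 + b ^ 2) * ((x + a * b / x) / (4 * x)) ^ 2 := by
    rw [landenMap, sq_sqrt (by positivity)]
    field_simp
    ring
  have hP' : √((x ^ 2 + a ^ 2) * (x ^ 2 + b ^ 2)) ≠ 0 := (sqrt_pos.2 hP).ne'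
  rw [agmKernel, agmKernel, hprod, sqrt_mul hP.le, sqrt_sq (by positivity)]
  field_simp
  ring

lemma integral_agmKernel_agm_step {a b : ℝ} (ha : 0 < a) (hb : 0 < b) :
    ∫ x in Ioi 0, agmKernel ((a + b) / 2) √(a * b) x = ∫ x in Ioi 0, agmKernel a b x := by
  have hab : 0 < a * b := mul_pos ha hb
  have hderiv : ∀ x ∈ Ioi (0 : ℝ),
      HasDerivWithinAt (landenMap (a * b)) ((1 + a * b / x ^ 2) / 2) (Ioi 0) x := fun x hx =>
    (hasDerivAt_landenMap _ (ne_of_gt hx)).hasDerivWithinAt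
  have key := integral_image_eq_integral_abs_deriv_smul measurableSet_Ioi hderiv
    (strictMonoOn_landenMap hab.le).injOn (agmKernel ((a + b) / 2) √(a * b))
  rw [landenMap_image_Ioi hab, setIntegral_univ] at key
  have heven : ∫ x, agmKernel ((a + b) / 2) √(a * b) x
      = ∫ x, agmKernel ((a + b) / 2) √(a * b) |x| := by
    simp only [agmKernel, sq_abs]
  have hsubst : ∫ x in Ioi 0, |(1 + a * b / x ^ 2) / 2|
      • agmKernel ((a + b) / 2) √(a * b) (landenMap (a * b) x)
      = ∫ x in Ioi 0, 2 * agmKernel a b x :=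
    setIntegral_congr_fun measurableSet_Ioi fun x hx => by
      rw [smul_eq_mul, abs_of_pos (by positivity), mul_agmKernel_landenMap ha hb hx]
  rw [heven, integral_comp_abs, hsubst, integral_const_mul] at key
  linarith

lemma agmIntegral_agm_step {a b : ℝ} (ha : 0 < a) (hb : 0 < b) :
    agmIntegral ((a + b) / 2) √(a * b) = agmIntegral a b := by
  rw [agmIntegral_eq_integral_agmKernel (by positivity) (by positivity),
    agmIntegral_eq_integral_agmKernel ha hb, integral_agmKernel_agm_step ha hb]

lemma sq_cos_sq_add_sq_sin_sq_mem_Icc {a b : ℝ} (hab : b ^ 2 ≤ a ^ 2) (θ : ℝ) :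
    a ^ 2 * cos θ ^ 2 + b ^ 2 * sin θ ^ 2 ∈ Icc (b ^ 2) (a ^ 2) :=
  ⟨by nlinarith [sin_sq_add_cos_sq θ, mul_nonneg (sub_nonneg.2 hab) (sq_nonneg (cos θ))],
    by nlinarith [sin_sq_add_cos_sq θ, mul_nonneg (sub_nonneg.2 hab) (sq_nonneg (sin θ))]⟩

lemma agmIntegrand_mem_Icc {a b : ℝ} (hb : 0 < b) (hab : b ≤ a) (θ : ℝ) :
    agmIntegrand a b θ ∈ Icc (1 / a) (1 / b) := by
  obtain ⟨hlow, hhigh⟩ :=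
    sq_cos_sq_add_sq_sin_sq_mem_Icc (pow_le_pow_left₀ hb.le hab 2) θ
  have hb_le : b ≤ √(a ^ 2 * cos θ ^ 2 + b ^ 2 * sin θ ^ 2) :=
    (le_sqrt hb.le (by positivity)).2 hlow
  exact ⟨one_div_le_one_div_of_le (hb.trans_le hb_le) (sqrt_le_iff.2 ⟨by linarith, hhigh⟩),
    one_div_le_one_div_of_le hb hb_le⟩

lemma continuous_agmIntegrand {a b : ℝ} (hb : b ≠ 0) (hab : b ^ 2 ≤ a ^ 2) :
    Continuous (agmIntegrand a b) :=
  continuous_const.div (by fun_prop) fun θ => (sqrt_pos.2 <|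
    (pow_two_pos_of_ne_zero hb).trans_le (sq_cos_sq_add_sq_sin_sq_mem_Icc hab θ).1).ne'

lemma agmIntegral_mem_Icc {a b : ℝ} (hb : 0 < b) (hab : b ≤ a) :
    agmIntegral a b ∈ Icc (π / (2 * a)) (π / (2 * b)) := by
  have hint : IntervalIntegrable (agmIntegrand a b) volume 0 (π / 2) :=
    (continuous_agmIntegrand hb.ne' (pow_le_pow_left₀ hb.le hab 2)).intervalIntegrable _ _
  have hconst : ∀ c : ℝ, ∫ _ in (0 : ℝ)..(π / 2), 1 / c = π / (2 * c) := fun c => by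
    rw [intervalIntegral.integral_const, smul_eq_mul]
    ring
  constructor
  · rw [← hconst]
    exact intervalIntegral.integral_mono_on pi_div_two_pos.le intervalIntegrable_const hint
      fun θ _ => (agmIntegrand_mem_Icc hb hab θ).1
  · rw [← hconst]
    exact intervalIntegral.integral_mono_on pi_div_two_pos.le hint intervalIntegrable_const
      fun θ _ => (agmIntegrand_mem_Icc hb hab θ).2

lemma le_sqrt_mul_of_le {c d : ℝ} (hd : 0 ≤ d) (hdc : d ≤ c) : d ≤ √(c * d) :=
  (le_sqrt hd (by nlinarith)).2 (by nlinarith)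

lemma sqrt_mul_le_add_div_two {c d : ℝ} (hc : 0 ≤ c) (hd : 0 ≤ d) : √(c * d) ≤ (c + d) / 2 :=
  sqrt_le_iff.2 ⟨by positivity, by nlinarith [sq_nonneg (c - d)]⟩

structure IsAGMIteration (A B : ℕ → ℝ) : Prop where
  succ_fst : ∀ n, A (n + 1) = (A n + B n) / 2
  succ_snd : ∀ n, B (n + 1) = √(A n * B n)

namespace IsAGMIteration

variable {A B : ℕ → ℝ}

lemma snd_mem_Icc (h : IsAGMIteration A B) (h0 : 0 < B 0) (h0' : B 0 ≤ A 0) (n : ℕ) :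
    B n ∈ Icc (B 0) (A n) := by
  induction n with
  | zero => exact ⟨le_rfl, h0'⟩
  | succ n ih =>
    have hBn : 0 ≤ B n := h0.le.trans ih.1
    rw [h.succ_fst, h.succ_snd]
    exact ⟨ih.1.trans (le_sqrt_mul_of_le hBn ih.2),
      sqrt_mul_le_add_div_two (hBn.trans ih.2) hBn⟩

lemma agmIntegral_eq (h : IsAGMIteration A B) (h0 : 0 < B 0) (h0' : B 0 ≤ A 0) (n : ℕ) :
    agmIntegral (A n) (B n) = agmIntegral (A 0) (B 0) := by
  induction n with
  | zero => rfl
  | succ n ih =>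
    obtain ⟨hB0_le, hBn_le⟩ := h.snd_mem_Icc h0 h0' n
    have hBn : 0 < B n := h0.trans_le hB0_le
    rw [h.succ_fst, h.succ_snd, agmIntegral_agm_step (hBn.trans_le hBn_le) hBn, ih]

end IsAGMIteration

theorem gauss_agm_limit (a b : ℝ) (hb : 0 < b) (hab : b < a)
    (A B : ℕ → ℝ) (hA0 : A 0 = a) (hB0 : B 0 = b)
    (hA : ∀ n, A (n + 1) = (A n + B n) / 2)
    (hB : ∀ n, B (n + 1) = Real.sqrt (A n * B n))
    (M : ℝ) (hMA : Tendsto A atTop (nhds M)) (hMB : Tendsto B atTop (nhds M)) :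
    ∫ θ in (0:ℝ)..(π / 2),
        1 / Real.sqrt (a ^ 2 * Real.cos θ ^ 2 + b ^ 2 * Real.sin θ ^ 2) =
      π / (2 * M) := by
  have hAB : IsAGMIteration A B := ⟨hA, hB⟩
  subst hA0 hB0
  have hbounds := hAB.snd_mem_Icc hb hab.le
  have hM : 0 < M := hb.trans_le (ge_of_tendsto' hMB fun n => (hbounds n).1)
  have hsqueeze (n : ℕ) : agmIntegral (A 0) (B 0) ∈ Icc (π / (2 * A n)) (π / (2 * B n)) := by
    rw [← hAB.agmIntegral_eq hb hab.le n]
    exact agmIntegral_mem_Icc (hb.trans_le (hbounds n).1) (hbounds n).2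
  have hlim {C : ℕ → ℝ} (hC : Tendsto C atTop (𝓝 M)) :
      Tendsto (fun n => π / (2 * C n)) atTop (𝓝 (π / (2 * M))) :=
    tendsto_const_nhds.div (hC.const_mul 2) (by positivity)
  exact tendsto_const_nhds_iff.1 (tendsto_of_tendsto_of_tendsto_of_le_of_le (hlim hMA) (hlim hMB)
    (fun n => (hsqueeze n).1) (fun n => (hsqueeze n).2))
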